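/- For real numbers b ∈ [0,1), d ∈ (0,∞) and integer k ≥ 2, the sum ∑_{j=1}^{k} (1/2 / (1/2 + k - j)) · j^{-(b+d)} (i.e., ∑_{j=1}^k (φ_{k-j}^{1/2})^2 j^{-(b+d)}) is at most 2^b [(1-b)^{-1} + 2^{d+1}(ed)^{-1}] · (k+1)^{-b}. -/

import Mathlib

/-!
Split the sum at `j = (k + 1) / 2`. On the lower half the weight is at most `2 / (k + 1)` and
`j ^ (-(b + d)) ≤ j ^ (-b)`, whose partial sums up to `m` are at most `m ^ (1 - b) / (1 - b)` by
concavity of `t ↦ t ^ (1 - b)`. On the upper half `j ^ (-(b + d)) ≤ ((k + 1) / 2) ^ (-(b + d))`,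
while the weights are at most `1 / (k + 1 - j)`, which sum to the harmonic number
`H_k ≤ 2 log (k + 1) ≤ 2 (k + 1) ^ d / (e d)`.
-/

open Finset Real

lemma rpow_le_rpow_add_one_sub {p : ℝ} (hp0 : 0 ≤ p) (hp1 : p ≤ 1) {x : ℝ} (hx : 0 ≤ x) :
    x ^ p ≤ (x + 1) ^ p - p * (x + 1) ^ (p - 1) := by
  have hx1 : 0 < x + 1 := by linarith
  have hs : -1 ≤ -(x + 1)⁻¹ := neg_le_neg (inv_le_one_of_one_le₀ (by linarith))
  have hx_eq : x = (x + 1) * (1 + -(x + 1)⁻¹) := by field_simp; ring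
  calc x ^ p = (x + 1) ^ p * (1 + -(x + 1)⁻¹) ^ p := by
        rw [← mul_rpow hx1.le (by linarith), ← hx_eq]
    _ ≤ (x + 1) ^ p * (1 + p * -(x + 1)⁻¹) := by
        gcongr
        exact rpow_one_add_le_one_add_mul_self hs hp0 hp1
    _ = (x + 1) ^ p - p * (x + 1) ^ (p - 1) := by
        rw [rpow_sub_one hx1.ne']
        ring

lemma sum_Icc_rpow_sub_one_le {p : ℝ} (hp0 : 0 < p) (hp1 : p ≤ 1) (m : ℕ) :
    ∑ j ∈ Icc 1 m, (j : ℝ) ^ (p - 1) ≤ (m : ℝ) ^ p / p := by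
  induction m with
  | zero => simp [zero_rpow hp0.ne']
  | succ m ih =>
    rw [sum_Icc_succ_top (by omega), Nat.cast_succ]
    have := rpow_le_rpow_add_one_sub hp0.le hp1 m.cast_nonneg
    rw [le_div_iff₀ hp0] at ih ⊢
    linarith

lemma sum_Icc_inv_one_add_sub (k : ℕ) :
    ∑ j ∈ Icc 1 k, (1 + (k : ℝ) - j)⁻¹ = harmonic k := by
  rw [harmonic_eq_sum_Icc, Rat.cast_sum]
  refine sum_nbij' (fun j ↦ k + 1 - j) (fun i ↦ k + 1 - i) ?_ ?_ ?_ ?_ ?_ <;>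
    intro j hj <;> simp only [mem_Icc] at hj ⊢
  · omega
  · omega
  · omega
  · omega
  · rw [Nat.cast_sub (by omega)]
    push_cast
    ring_nf

lemma harmonic_le_two_mul_log_add_one (k : ℕ) : (harmonic k : ℝ) ≤ 2 * log (k + 1) := by
  rcases Nat.eq_zero_or_pos k with rfl | hk
  · simp
  have hk1 : (1 : ℝ) ≤ k := by exact_mod_cast hk
  have h_exp : exp 1 * k ≤ ((k : ℝ) + 1) ^ 2 := by
    nlinarith [exp_one_lt_d9]
  calc (harmonic k : ℝ) ≤ 1 + log k := harmonic_le_one_add_log k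
    _ = log (exp 1 * k) := by rw [log_mul (exp_pos 1).ne' (by positivity), log_exp]
    _ ≤ log (((k : ℝ) + 1) ^ 2) := log_le_log (by positivity) h_exp
    _ = 2 * log (k + 1) := by rw [log_pow]; norm_num

lemma log_le_rpow_div_exp_one_mul {d : ℝ} (hd : 0 < d) {x : ℝ} (hx : 0 < x) :
    log x ≤ x ^ d / (exp 1 * d) := by
  have h := log_le_sub_one_of_pos (div_pos (rpow_pos_of_pos hx d) (exp_pos 1))
  rw [log_div (rpow_pos_of_pos hx d).ne' (exp_pos 1).ne', log_rpow hx, log_exp] at h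
  rw [le_div_iff₀ (by positivity)]
  have := exp_pos 1
  calc log x * (exp 1 * d) = exp 1 * (d * log x) := by ring
    _ ≤ exp 1 * (x ^ d / exp 1) := by gcongr; linarith
    _ = x ^ d := by field_simp

lemma div_two_rpow_neg {x : ℝ} (hx : 0 ≤ x) (s : ℝ) : (x / 2) ^ (-s) = 2 ^ s * x ^ (-s) := by
  rw [div_rpow hx zero_le_two, rpow_neg zero_le_two, div_eq_mul_inv, inv_inv, mul_comm]

lemma half_weight_le_two_div {k j : ℕ} (hj : 1 ≤ j) (hjk : 2 * j ≤ k + 1) :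
    (1 / 2) / (1 / 2 + (k : ℝ) - j) ≤ 2 / (k + 1) := by
  have hj' : (1 : ℝ) ≤ j := by exact_mod_cast hj
  have hjk' : 2 * (j : ℝ) ≤ k + 1 := by exact_mod_cast hjk
  rw [div_le_div_iff₀ (by linarith) (by linarith)]
  linarith

lemma half_weight_le_inv {k j : ℕ} (hjk : j ≤ k) :
    (1 / 2) / (1 / 2 + (k : ℝ) - j) ≤ (1 + (k : ℝ) - j)⁻¹ := by
  have hjk' : (j : ℝ) ≤ k := by exact_mod_cast hjk
  rw [← one_div, div_le_div_iff₀ (by linarith) (by linarith)]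
  linarith

lemma sum_Ioc_lower_half_le {b d : ℝ} (hb0 : 0 ≤ b) (hb1 : b < 1) (hd : 0 ≤ d) (k : ℕ) :
    ∑ j ∈ Ioc 0 ((k + 1) / 2), (1 / 2) / (1 / 2 + (k : ℝ) - j) * (j : ℝ) ^ (-(b + d))
      ≤ 2 ^ b * (1 - b)⁻¹ * ((k : ℝ) + 1) ^ (-b) := by
  set m := (k + 1) / 2
  have hp : 0 < 1 - b := by linarith
  have hk : (0 : ℝ) < k + 1 := by positivity
  have hm : (m : ℝ) ≤ (k + 1) / 2 := by
    rw [le_div_iff₀ two_pos]; exact_mod_cast Nat.div_mul_le_self (k + 1) 2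
  calc ∑ j ∈ Ioc 0 m, (1 / 2) / (1 / 2 + (k : ℝ) - j) * (j : ℝ) ^ (-(b + d))
      ≤ ∑ j ∈ Icc 1 m, 2 / ((k : ℝ) + 1) * (j : ℝ) ^ ((1 - b) - 1) := by
        rw [← Icc_add_one_left_eq_Ioc]
        refine sum_le_sum fun j hj ↦ ?_
        rw [mem_Icc] at hj
        have hj1 : (1 : ℝ) ≤ j := by exact_mod_cast hj.1
        rw [sub_sub_cancel_left]
        exact mul_le_mul (half_weight_le_two_div hj.1 (by omega))
          (rpow_le_rpow_of_exponent_le hj1 (by linarith)) (by positivity) (by positivity)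
    _ ≤ 2 / ((k : ℝ) + 1) * (((k + 1) / 2) ^ (1 - b) / (1 - b)) := by
        rw [← mul_sum]
        gcongr
        exact (sum_Icc_rpow_sub_one_le hp (by linarith) m).trans (by gcongr)
    _ = 2 ^ b * (1 - b)⁻¹ * ((k : ℝ) + 1) ^ (-b) := by
        rw [sub_eq_add_neg, rpow_add (by positivity), rpow_one, div_two_rpow_neg hk.le]
        field_simp

lemma sum_Ioc_upper_half_le {b d : ℝ} (hbd : 0 ≤ b + d) (hd : 0 < d) (k : ℕ) :
    ∑ j ∈ Ioc ((k + 1) / 2) k, (1 / 2) / (1 / 2 + (k : ℝ) - j) * (j : ℝ) ^ (-(b + d))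
      ≤ 2 ^ b * (2 ^ (d + 1) * (exp 1 * d)⁻¹) * ((k : ℝ) + 1) ^ (-b) := by
  set x : ℝ := k + 1
  have hx : 0 < x := by positivity
  set C := (x / 2) ^ (-(b + d))
  have hC : 0 ≤ C := by positivity
  calc ∑ j ∈ Ioc ((k + 1) / 2) k, (1 / 2) / (1 / 2 + (k : ℝ) - j) * (j : ℝ) ^ (-(b + d))
      ≤ ∑ j ∈ Ioc ((k + 1) / 2) k, (1 + (k : ℝ) - j)⁻¹ * C := by
        refine sum_le_sum fun j hj ↦ ?_
        rw [mem_Ioc] at hj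
        have hjx : x / 2 ≤ j := by
          have : ((k + 1 : ℕ) : ℝ) ≤ ((2 * j : ℕ) : ℝ) := Nat.cast_le.2 (by omega)
          push_cast at this
          linarith
        exact mul_le_mul (half_weight_le_inv hj.2)
          (rpow_le_rpow_of_nonpos (by positivity) hjx (by linarith)) (by positivity)
          (inv_nonneg.2 (by linarith [(Nat.cast_le (α := ℝ)).2 hj.2]))
    _ ≤ ∑ j ∈ Icc 1 k, (1 + (k : ℝ) - j)⁻¹ * C := by
        refine sum_le_sum_of_subset_of_nonneg (fun j hj ↦ ?_) fun j hj _ ↦ ?_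
        · simp only [mem_Ioc, mem_Icc] at hj ⊢; omega
        · rw [mem_Icc] at hj
          have : (j : ℝ) ≤ k := by exact_mod_cast hj.2
          exact mul_nonneg (inv_nonneg.2 (by linarith)) hC
    _ = harmonic k * C := by rw [← sum_mul, sum_Icc_inv_one_add_sub]
    _ ≤ 2 * (x ^ d / (exp 1 * d)) * C := by
        gcongr
        exact (harmonic_le_two_mul_log_add_one k).trans
          (by gcongr; exact log_le_rpow_div_exp_one_mul hd hx)
    _ = 2 ^ b * (2 ^ (d + 1) * (exp 1 * d)⁻¹) * x ^ (-b) := by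
        have hx_pow : x ^ d * x ^ (-(b + d)) = x ^ (-b) := by
          rw [← rpow_add hx]; ring_nf
        have h_two : (2 : ℝ) ^ (b + d) * 2 = 2 ^ b * 2 ^ (d + 1) := by
          rw [rpow_add two_pos, rpow_add two_pos, rpow_one]; ring
        rw [show C = 2 ^ (b + d) * x ^ (-(b + d)) from div_two_rpow_neg hx.le _, ← hx_pow]
        linear_combination (x ^ d * x ^ (-(b + d)) / (exp 1 * d)) * h_two

theorem stmt_2_general (b d : ℝ) (hb0 : 0 ≤ b) (hb1 : b < 1) (hd : 0 < d)
    (k : ℕ) :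
    ∑ j ∈ Finset.Icc 1 k,
        ((1 / 2) / (1 / 2 + (k : ℝ) - (j : ℝ))) * (j : ℝ) ^ (-(b + d))
      ≤ (2 : ℝ) ^ b * ((1 - b)⁻¹ + 2 ^ (d + 1) * (Real.exp 1 * d)⁻¹) *
        ((k : ℝ) + 1) ^ (-b) := by
  rw [show Icc 1 k = Ioc 0 k from Icc_add_one_left_eq_Ioc 0 k, ← sum_Ioc_consecutive _ (Nat.zero_le ((k + 1) / 2))
    (by omega : (k + 1) / 2 ≤ k)]
  exact (add_le_add (sum_Ioc_lower_half_le hb0 hb1 hd.le k)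
    (sum_Ioc_upper_half_le (by linarith) hd k)).trans_eq (by ring)

theorem stmt_2 (b d : ℝ) (hb0 : 0 ≤ b) (hb1 : b < 1) (hd : 0 < d)
    (k : ℕ) (hk : 2 ≤ k) :
    ∑ j ∈ Finset.Icc 1 k,
        ((1 / 2) / (1 / 2 + (k : ℝ) - (j : ℝ))) * (j : ℝ) ^ (-(b + d))
      ≤ (2 : ℝ) ^ b * ((1 - b)⁻¹ + 2 ^ (d + 1) * (Real.exp 1 * d)⁻¹) *
        ((k : ℝ) + 1) ^ (-b) :=
  stmt_2_general b d hb0 hb1 hd k
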